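/- arXiv:2411.16984 — 5 statements merged into one kernel-verified Lean document; each statement's English description precedes it below -/
import Mathlib

section
/- For every ν with 0 ≤ ν < 1/2 there exists a constant C = C(ν) such that for all real μ ≥ 1, the sum of k^{2ν} / (|k − μ| + 1)^2 over positive integers k with |k − μ| > μ/2 is at most C μ^{2ν − 1}. -/
open scoped Classical

lemma mvt_rpow' {q y x : ℝ} (hq : q < 0) (hy : 0 < y) (hyx : y < x) :
    (-q) * x ^ (q - 1) * (x - y) ≤ y ^ q - x ^ q := by
  obtain ⟨ξ, hξ, hder⟩ := exists_hasDerivAt_eq_slope (fun t => t ^ q)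
    (fun t => q * t ^ (q - 1)) hyx
    (fun t ht => (Real.continuousAt_rpow_const t q
      (Or.inl (ne_of_gt (lt_of_lt_of_le hy ht.1)))).continuousWithinAt)
    (fun t ht => Real.hasDerivAt_rpow_const (Or.inl (ne_of_gt (hy.trans ht.1))))
  have hx0 : 0 < x := hy.trans hyx
  have hξ0 : 0 < ξ := hy.trans hξ.1
  have h1 : x ^ (q - 1) ≤ ξ ^ (q - 1) :=
    Real.rpow_le_rpow_of_nonpos hξ0 hξ.2.le (by linarith)
  have hxy : 0 < x - y := sub_pos.2 hyx
  have heq : x ^ q - y ^ q = q * ξ ^ (q - 1) * (x - y) := by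
    rw [hder]; field_simp
  have h2 := mul_le_mul_of_nonneg_right
    (mul_le_mul_of_nonneg_left h1 (neg_nonneg.2 hq.le)) hxy.le
  linarith

/-- For every `0 ≤ ν < 1/2` there is `C` such that for all `μ ≥ 1`, the sum of
`k^{2ν} / (|k − μ| + 1)^2` over positive integers `k` with `|k − μ| > μ/2` is at most
`C μ^{2ν − 1}`. -/
theorem stmt_5 (ν : ℝ) (hν0 : 0 ≤ ν) (hν : ν < 1 / 2) :
    ∃ C : ℝ, 0 < C ∧ ∀ μ : ℝ, 1 ≤ μ →
      (∑' k : ℕ+, if μ / 2 < |(k : ℝ) - μ| then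
          ((k : ℝ) ^ (2 * ν)) / ((|(k : ℝ) - μ| + 1) ^ 2) else 0)
        ≤ C * μ ^ (2 * ν - 1) := by
  have hs : 0 < 1 - 2 * ν := by linarith
  refine ⟨8 + 36 / (1 - 2 * ν), by positivity, fun μ hμ => ?_⟩
  have hμ0 : 0 < μ := by linarith
  have hq0 : 2 * ν - 1 < 0 := by linarith
  have hμq : 0 < μ ^ (2 * ν - 1) := Real.rpow_pos_of_pos hμ0 _
  -- reindex from ℕ+ to ℕ
  have hrw : (∑' k : ℕ+, if μ / 2 < |(k : ℝ) - μ| then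
          ((k : ℝ) ^ (2 * ν)) / ((|(k : ℝ) - μ| + 1) ^ 2) else 0)
      = ∑' n : ℕ, (if μ / 2 < |((n : ℝ) + 1) - μ| then
          (((n : ℝ) + 1) ^ (2 * ν)) / ((|((n : ℝ) + 1) - μ| + 1) ^ 2) else 0) := by
    rw [← Equiv.pnatEquivNat.symm.tsum_eq]
    congr 1; funext n
    have hc : ((Equiv.pnatEquivNat.symm n : ℕ+) : ℝ) = (n : ℝ) + 1 := by
      simp [Equiv.pnatEquivNat]
    rw [hc]
  rw [hrw]
  set b : ℕ → ℝ := fun n => (max (μ / 2) ((n : ℝ) + 1 / 2 - μ)) ^ (2 * ν - 1) with hbdef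
  have hbase : ∀ n : ℕ, 0 < max (μ / 2) ((n : ℝ) + 1 / 2 - μ) := fun n =>
    lt_max_of_lt_left (by linarith)
  have hbanti : ∀ n : ℕ, b (n + 1) ≤ b n := by
    intro n
    exact Real.rpow_le_rpow_of_nonpos (hbase n)
      (max_le_max le_rfl (by push_cast; linarith)) hq0.le
  have hbnonneg : ∀ n, 0 ≤ b n := fun n => Real.rpow_nonneg (hbase n).le _
  have hfac : (0:ℝ) ≤ 18 / (1 - 2 * ν) := by positivity
  -- termwise bound
  have key : ∀ n : ℕ, (if μ / 2 < |((n : ℝ) + 1) - μ| then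
          (((n : ℝ) + 1) ^ (2 * ν)) / ((|((n : ℝ) + 1) - μ| + 1) ^ 2) else 0)
      ≤ (if ((n : ℝ) + 1) ≤ μ then 4 * μ ^ (2 * ν - 2) else 0)
        + (18 / (1 - 2 * ν)) * (b n - b (n + 1)) := by
    intro n
    have hdiff : 0 ≤ (18 / (1 - 2 * ν)) * (b n - b (n + 1)) :=
      mul_nonneg hfac (sub_nonneg.2 (hbanti n))
    set x : ℝ := (n : ℝ) + 1 with hxdef
    have hx1 : (1 : ℝ) ≤ x := by simp [hxdef]
    split_ifs with h1 h2
    · -- condition holds, x ≤ μ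
      have habs : |x - μ| = μ - x := by rw [abs_of_nonpos (by linarith)]; ring
      rw [habs] at h1 ⊢
      have hnum : x ^ (2 * ν) ≤ μ ^ (2 * ν) :=
        Real.rpow_le_rpow (by linarith) h2 (by linarith)
      have hden : (μ / 2) ^ 2 ≤ (μ - x + 1) ^ 2 := by nlinarith
      have hstep : x ^ (2 * ν) / (μ - x + 1) ^ 2 ≤ μ ^ (2 * ν) / (μ / 2) ^ 2 :=
        div_le_div₀ (Real.rpow_nonneg hμ0.le _) hnum (by positivity) hden
      have he : μ ^ (2 * ν) / (μ / 2) ^ 2 = 4 * μ ^ (2 * ν - 2) := by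
        have e2 : μ ^ (2 * ν - 2) = μ ^ (2 * ν) / μ ^ (2 : ℕ) := by
          rw [← Real.rpow_natCast μ 2, ← Real.rpow_sub hμ0]; norm_num
        rw [e2]
        field_simp
        ring
      linarith [hstep.trans_eq he]
    · -- condition holds, μ < x
      push_neg at h2
      have habs : |x - μ| = x - μ := abs_of_pos (by linarith)
      rw [habs] at h1 ⊢
      set D : ℝ := x - μ + 1 with hDdef
      have hD1 : (1 : ℝ) < D := by simp [hDdef]; linarith
      have hD0 : (0 : ℝ) < D := by linarith
      -- numerator bound : x ≤ 3(x-μ) ≤ 3D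
      have hx3 : x ≤ 3 * D := by simp only [hDdef]; linarith
      have hnum : x ^ (2 * ν) ≤ 3 * D ^ (2 * ν) := by
        calc x ^ (2 * ν) ≤ (3 * D) ^ (2 * ν) :=
              Real.rpow_le_rpow (by linarith) hx3 (by linarith)
          _ = 3 ^ (2 * ν) * D ^ (2 * ν) := Real.mul_rpow (by norm_num) hD0.le
          _ ≤ 3 * D ^ (2 * ν) := by
              have h3 : (3:ℝ) ^ (2 * ν) ≤ 3 ^ (1:ℝ) :=
                Real.rpow_le_rpow_of_exponent_le (by norm_num) (by linarith)
              rw [Real.rpow_one] at h3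
              exact mul_le_mul_of_nonneg_right h3 (Real.rpow_nonneg hD0.le _)
      have hlhs : x ^ (2 * ν) / D ^ 2 ≤ 3 * D ^ (2 * ν - 2) := by
        have e2 : D ^ (2 * ν - 2) = D ^ (2 * ν) / D ^ (2 : ℕ) := by
          rw [← Real.rpow_natCast D 2, ← Real.rpow_sub hD0]; norm_num
        rw [e2, ← mul_div_assoc]
        exact (div_le_div_iff_of_pos_right (by positivity)).2 hnum
      -- telescoping lower bound for b n - b (n+1)
      set X : ℝ := x + 1 / 2 - μ with hXdef
      set y : ℝ := max (μ / 2) (x - 1 / 2 - μ) with hydef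
      have hbn1 : b (n + 1) = X ^ (2 * ν - 1) := by
        simp only [hbdef]
        rw [show ((n + 1 : ℕ) : ℝ) + 1 / 2 - μ = X by
          push_cast; simp only [hXdef, hxdef]; try ring]
        rw [max_eq_right (by simp only [hXdef]; linarith)]
      have hbn : b n = y ^ (2 * ν - 1) := by
        have hnx : (n : ℝ) + 1 / 2 - μ = x - 1 / 2 - μ := by simp only [hxdef]; ring
        simp only [hbdef, hnx, hydef]
      have hy0 : 0 < y := lt_max_of_lt_left (by linarith)
      have hyX : y < X := by
        apply max_lt (by simp only [hXdef]; linarith) (by simp only [hXdef]; linarith)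
      have hgap : 1 / 2 ≤ X - y := by
        have : y ≤ X - 1 / 2 :=
          max_le (by simp only [hXdef]; linarith) (by simp only [hXdef]; linarith)
        linarith
      have hmvt' : (1 - 2 * ν) * X ^ (2 * ν - 2) * (X - y)
          ≤ y ^ (2 * ν - 1) - X ^ (2 * ν - 1) := by
        have hmvt := mvt_rpow' hq0 hy0 hyX
        rw [show (2 * ν - 2 : ℝ) = 2 * ν - 1 - 1 by ring]
        linarith
      have hX0 : (0:ℝ) < X := hy0.trans hyX
      have hXD : D ^ (2 * ν - 2) ≤ X ^ (2 * ν - 2) :=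
        Real.rpow_le_rpow_of_nonpos hX0
          (by simp only [hXdef, hDdef]; linarith) (by linarith)
      have hbd : (1 - 2 * ν) / 2 * D ^ (2 * ν - 2) ≤ b n - b (n + 1) := by
        rw [hbn, hbn1]
        have hA : 0 ≤ (1 - 2 * ν) * X ^ (2 * ν - 2) :=
          mul_nonneg (by linarith) (Real.rpow_nonneg hX0.le _)
        have step : (1 - 2 * ν) / 2 * D ^ (2 * ν - 2)
            ≤ (1 - 2 * ν) * X ^ (2 * ν - 2) * (X - y) :=
          calc (1 - 2 * ν) / 2 * D ^ (2 * ν - 2)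
              ≤ (1 - 2 * ν) / 2 * X ^ (2 * ν - 2) :=
                mul_le_mul_of_nonneg_left hXD (by linarith)
            _ = (1 - 2 * ν) * X ^ (2 * ν - 2) * (1 / 2) := by ring
            _ ≤ (1 - 2 * ν) * X ^ (2 * ν - 2) * (X - y) :=
                mul_le_mul_of_nonneg_left hgap hA
        exact step.trans hmvt'
      have hfinal : 3 * D ^ (2 * ν - 2) ≤ (18 / (1 - 2 * ν)) * (b n - b (n + 1)) := by
        have h9 : (18 / (1 - 2 * ν)) * ((1 - 2 * ν) / 2 * D ^ (2 * ν - 2))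
            = 9 * D ^ (2 * ν - 2) := by field_simp; ring
        have hmul := mul_le_mul_of_nonneg_left hbd hfac
        rw [h9] at hmul
        have hDp : 0 ≤ D ^ (2 * ν - 2) := Real.rpow_nonneg hD0.le _
        linarith
      linarith [hlhs.trans hfinal]
    · -- condition fails, left if true
      have : (0:ℝ) ≤ 4 * μ ^ (2 * ν - 2) := by positivity
      linarith
    · linarith
  -- sum the bound
  apply Real.tsum_le_of_sum_range_le
  · intro n; split <;> positivity
  intro m
  have hsum1 : ∑ n ∈ Finset.range m,
      (if ((n : ℝ) + 1) ≤ μ then 4 * μ ^ (2 * ν - 2) else 0) ≤ 4 * μ ^ (2 * ν - 1) := by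
    have hterm : ∀ n ∈ Finset.range m, (if ((n : ℝ) + 1) ≤ μ then 4 * μ ^ (2 * ν - 2) else 0)
        ≤ (if n < ⌊μ⌋₊ then 4 * μ ^ (2 * ν - 2) else 0) := by
      intro n _
      split_ifs with hA hB hB
      · exact le_refl _
      · exfalso
        apply hB
        have : ((n + 1 : ℕ) : ℝ) ≤ μ := by push_cast; linarith
        exact Nat.lt_of_lt_of_le (Nat.lt_succ_self n) (Nat.le_floor this)
      · positivity
      · exact le_refl _
    calc ∑ n ∈ Finset.range m, (if ((n : ℝ) + 1) ≤ μ then 4 * μ ^ (2 * ν - 2) else 0)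
        ≤ ∑ n ∈ Finset.range m, (if n < ⌊μ⌋₊ then 4 * μ ^ (2 * ν - 2) else 0) :=
          Finset.sum_le_sum hterm
      _ ≤ ∑ _n ∈ Finset.range ⌊μ⌋₊, (4 * μ ^ (2 * ν - 2)) := by
          rw [← Finset.sum_filter]
          apply Finset.sum_le_sum_of_subset_of_nonneg
          · intro n hn
            rw [Finset.mem_filter] at hn
            exact Finset.mem_range.2 hn.2
          · intros; positivity
      _ = (⌊μ⌋₊ : ℝ) * (4 * μ ^ (2 * ν - 2)) := by
          rw [Finset.sum_const, Finset.card_range, nsmul_eq_mul]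
      _ ≤ μ * (4 * μ ^ (2 * ν - 2)) :=
          mul_le_mul_of_nonneg_right (Nat.floor_le hμ0.le) (by positivity)
      _ = 4 * μ ^ (2 * ν - 1) := by
          rw [show (2 * ν - 1 : ℝ) = 1 + (2 * ν - 2) by ring, Real.rpow_add hμ0,
            Real.rpow_one]
          ring
  have hsum2 : ∑ n ∈ Finset.range m, (18 / (1 - 2 * ν)) * (b n - b (n + 1))
      ≤ 36 / (1 - 2 * ν) * μ ^ (2 * ν - 1) := by
    rw [← Finset.mul_sum, Finset.sum_range_sub']
    have hb0 : b 0 = (μ / 2) ^ (2 * ν - 1) := by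
      simp only [hbdef]
      rw [max_eq_left (by push_cast; linarith)]
    have hb0le : b 0 ≤ 2 * μ ^ (2 * ν - 1) := by
      rw [hb0, Real.div_rpow hμ0.le (by norm_num)]
      have h2q : (1:ℝ) / 2 ≤ (2:ℝ) ^ (2 * ν - 1) := by
        have := Real.rpow_le_rpow_of_exponent_le (one_le_two)
          (by linarith : (-1 : ℝ) ≤ 2 * ν - 1)
        rwa [Real.rpow_neg_one, ← one_div] at this
      rw [div_le_iff₀ (by positivity)]
      have hm := mul_le_mul_of_nonneg_left h2q (Real.rpow_nonneg hμ0.le (2 * ν - 1))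
      linarith
    calc 18 / (1 - 2 * ν) * (b 0 - b m) ≤ 18 / (1 - 2 * ν) * b 0 :=
          mul_le_mul_of_nonneg_left (by linarith [hbnonneg m]) hfac
      _ ≤ 18 / (1 - 2 * ν) * (2 * μ ^ (2 * ν - 1)) := mul_le_mul_of_nonneg_left hb0le hfac
      _ = 36 / (1 - 2 * ν) * μ ^ (2 * ν - 1) := by ring
  calc ∑ n ∈ Finset.range m, (if μ / 2 < |((n : ℝ) + 1) - μ| then
          (((n : ℝ) + 1) ^ (2 * ν)) / ((|((n : ℝ) + 1) - μ| + 1) ^ 2) else 0)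
      ≤ ∑ n ∈ Finset.range m, ((if ((n : ℝ) + 1) ≤ μ then 4 * μ ^ (2 * ν - 2) else 0)
        + (18 / (1 - 2 * ν)) * (b n - b (n + 1))) :=
        Finset.sum_le_sum fun n _ => key n
    _ = (∑ n ∈ Finset.range m, (if ((n : ℝ) + 1) ≤ μ then 4 * μ ^ (2 * ν - 2) else 0))
        + ∑ n ∈ Finset.range m, (18 / (1 - 2 * ν)) * (b n - b (n + 1)) :=
        Finset.sum_add_distrib
    _ ≤ 4 * μ ^ (2 * ν - 1) + 36 / (1 - 2 * ν) * μ ^ (2 * ν - 1) := add_le_add hsum1 hsum2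
    _ ≤ (8 + 36 / (1 - 2 * ν)) * μ ^ (2 * ν - 1) := by
        have : (4:ℝ) * μ ^ (2 * ν - 1) ≤ 8 * μ ^ (2 * ν - 1) := by linarith
        ring_nf
        ring_nf at this
        linarith
end

section
/- Let (X, μ) be a measure space, let 1 ≤ q < ∞, define p by 1/p = 1/(2q) + 1/2 with conjugate exponent p′, and let T : L^p(μ) → L^{p′}(μ) be a bounded linear operator. Then for every g ∈ L^p(μ) with ‖g‖_{L^p} = 1 there exists a nonnegative χ ∈ L^{2q}(μ) with ‖χ‖_{L^{2q}} = 1 such that the bounded operator S_χ : L^2(μ) → L^2(μ), S_χ f = χ·T(χ·f), satisfies ‖S_χ‖_{L^2 → L^2} ≥ | ∫_X ḡ · (T g) dμ |. In particular, sup over nonnegative normalized χ ∈ L^{2q} of ‖S_χ‖_{L^2 → L^2} is at least sup over normalized g ∈ L^p of | ∫_X ḡ · (T g) dμ |. -/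
open MeasureTheory
open scoped ENNReal

set_option maxHeartbeats 1600000
set_option synthInstance.maxHeartbeats 400000

/-- **Duality step.** Let `1 ≤ q < ∞`, `1/p = 1/(2q) + 1/2`, `1/p + 1/p' = 1`, and let
`T : L^p → L^{p'}` be bounded. For every normalized `g ∈ L^p` there is a nonnegative
normalized `χ ∈ L^{2q}` such that the bounded operator `S_χ : f ↦ χ·T(χ·f)` on `L^2`
has norm at least `|∫ ḡ (T g) dμ|`. -/
theorem stmt_12 {X : Type*} [MeasurableSpace X] (μ : Measure X)
    (q : ℝ) (hq : 1 ≤ q)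
    (p p' : ℝ≥0∞) [Fact (1 ≤ p)] [Fact (1 ≤ p')]
    (hp : 1 / p = 1 / (2 * ENNReal.ofReal q) + 1 / 2)
    (hpp' : 1 / p + 1 / p' = 1)
    (T : Lp ℂ p μ →L[ℂ] Lp ℂ p' μ)
    (g : Lp ℂ p μ) (hg1 : ‖g‖ = 1) :
    ∃ χ : X → ℝ, (∀ x, 0 ≤ χ x) ∧
      MemLp (fun x => (χ x : ℂ)) (2 * ENNReal.ofReal q) μ ∧
      eLpNorm (fun x => (χ x : ℂ)) (2 * ENNReal.ofReal q) μ = 1 ∧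
      (∀ f : Lp ℂ 2 μ, MemLp (fun x => (χ x : ℂ) * f x) p μ) ∧
      ∃ S : Lp ℂ 2 μ →L[ℂ] Lp ℂ 2 μ,
        (∀ (f : Lp ℂ 2 μ) (h : Lp ℂ p μ), (h : X → ℂ) =ᵐ[μ] (fun x => (χ x : ℂ) * f x) →
          (S f : X → ℂ) =ᵐ[μ] (fun x => (χ x : ℂ) * (T h) x)) ∧
        ‖∫ x, (starRingEnd ℂ) (g x) * (T g) x ∂μ‖ ≤ ‖S‖ := by
  classical
  have hq0 : (0:ℝ) < q := lt_of_lt_of_le one_pos hq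
  set r : ℝ≥0∞ := 2 * ENNReal.ofReal q with hrdef
  have hr0 : r ≠ 0 := by
    simp [hrdef, ENNReal.ofReal_eq_zero, not_le, hq0]
  have hrtop : r ≠ ∞ := by
    simp [hrdef, ENNReal.mul_eq_top]
  have hrtoReal : r.toReal = 2 * q := by
    simp [hrdef, ENNReal.toReal_mul, ENNReal.toReal_ofReal hq0.le]
  have hrtR0 : (0:ℝ) < 2 * q := by linarith
  -- p facts
  have hp_ne_top : p ≠ ∞ := by
    intro h
    rw [h, ENNReal.div_top] at hp
    have h2 : (1:ℝ≥0∞)/2 = 0 := (add_eq_zero.mp hp.symm).2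
    simp at h2
  have hp_ne_zero : p ≠ 0 := (lt_of_lt_of_le one_pos (Fact.out : 1 ≤ p)).ne'
  set a := p.toReal with hadef
  have ha0 : 0 < a := ENNReal.toReal_pos hp_ne_zero hp_ne_top
  have ha : 1 / a = 1 / (2*q) + 1 / 2 := by
    have h1 := congrArg ENNReal.toReal hp
    rw [ENNReal.toReal_add (by simp [one_div, hr0]) (by norm_num)] at h1
    simpa [ENNReal.toReal_div, hrtoReal] using h1
  -- Hölder relation for p': 1/2 = 1/r + 1/p'
  have hhold2 : (1:ℝ≥0∞)/2 = 1/r + 1/p' := by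
    have h1 : (1:ℝ≥0∞)/2 + (1/r + 1/p') = 1/2 + (1/2 : ℝ≥0∞) := by
      have h2 : (1:ℝ≥0∞)/2 + (1/r + 1/p') = 1/p + 1/p' := by rw [hp]; ring
      rw [h2, hpp', ENNReal.add_halves]
    exact ((ENNReal.add_right_inj (by norm_num)).mp h1).symm
  -- exponent arithmetic
  set e : ℝ := a / (2*q) with hedef
  have he0 : 0 < e := div_pos ha0 hrtR0
  have hea : e * (2*q) = a := div_mul_cancel₀ a hrtR0.ne'
  have hexp : 2 * (1 - e) = a := by
    have haq : a ≠ 0 := ha0.ne'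
    have hqq : q ≠ 0 := hq0.ne'
    field_simp [hedef] at ha ⊢
    nlinarith [ha]
  -- the normalized integral of |g|^a
  have hgm : AEStronglyMeasurable (g : X → ℂ) μ := Lp.aestronglyMeasurable g
  have hint : ∫⁻ x, (‖(g : X → ℂ) x‖₊ : ℝ≥0∞) ^ a ∂μ = 1 := by
    have h1 : eLpNorm (g : X → ℂ) p μ = 1 := by
      rw [← ENNReal.toReal_eq_one_iff, ← Lp.norm_def, hg1]
    rw [eLpNorm_eq_lintegral_rpow_enorm_toReal hp_ne_zero hp_ne_top] at h1
    have := congrArg (· ^ a) h1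
    simpa [← ENNReal.rpow_mul, one_div, ← hadef, inv_mul_cancel₀ ha0.ne', enorm_eq_nnnorm] using this
  -- the weight χ
  set χ : X → ℝ := fun x => ‖(g : X → ℂ) x‖ ^ e with hχdef
  set χc : X → ℂ := fun x => ((χ x : ℝ) : ℂ) with hχcdef
  have hχnonneg : ∀ x, 0 ≤ χ x := fun x => Real.rpow_nonneg (norm_nonneg _) _
  have hχm : AEMeasurable χ μ := hgm.norm.aemeasurable.pow_const e
  have hχcm : AEStronglyMeasurable χc μ :=
    (Complex.measurable_ofReal.comp_aemeasurable hχm).aestronglyMeasurable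
  have hχnorm : eLpNorm χc r μ = 1 := by
    have hpt : ∀ x, (‖χc x‖₊ : ℝ≥0∞) ^ r.toReal = (‖(g : X → ℂ) x‖₊ : ℝ≥0∞) ^ a := by
      intro x
      rw [← enorm_eq_nnnorm, ← enorm_eq_nnnorm, ← ofReal_norm, ← ofReal_norm]
      rw [show ‖χc x‖ = χ x by
        rw [hχcdef]; simp [Complex.norm_real, Real.norm_eq_abs, abs_of_nonneg (hχnonneg x)]]
      rw [ENNReal.ofReal_rpow_of_nonneg (hχnonneg x) (by linarith [hrtoReal ▸ hrtR0] : (0:ℝ) ≤ r.toReal)]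
      rw [hχdef]
      rw [← Real.rpow_mul (norm_nonneg _) e r.toReal, hrtoReal, hea]
      rw [ENNReal.ofReal_rpow_of_nonneg (norm_nonneg _) ha0.le]
    rw [eLpNorm_eq_lintegral_rpow_enorm_toReal hr0 hrtop]; simp only [enorm_eq_nnnorm]; rw [lintegral_congr hpt, hint,
      ENNReal.one_rpow]
  have hχmem : MemLp χc r μ := ⟨hχcm, by rw [hχnorm]; exact ENNReal.one_lt_top⟩
  -- multiplication by χ maps L² into Lᵖ
  have hmul : ∀ f : Lp ℂ 2 μ, MemLp (fun x => χc x * (f : X → ℂ) x) p μ := by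
    intro f
    exact (Lp.memLp f).smul hχmem (hpqr := ⟨by simpa [one_div] using hp.symm⟩)
  -- the sandwiched operator
  let h₀ : Lp ℂ 2 μ → Lp ℂ p μ := fun f => (hmul f).toLp _
  have h₀coe : ∀ f, (h₀ f : X → ℂ) =ᵐ[μ] fun x => χc x * (f : X → ℂ) x :=
    fun f => (hmul f).coeFn_toLp
  have memS : ∀ f : Lp ℂ 2 μ, MemLp (fun x => χc x * (T (h₀ f) : X → ℂ) x) 2 μ := by
    intro f
    exact (Lp.memLp (T (h₀ f))).smul hχmem (hpqr := ⟨by simpa [one_div] using hhold2.symm⟩)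
  let Smap : Lp ℂ 2 μ → Lp ℂ 2 μ := fun f => (memS f).toLp _
  have Sdef : ∀ f, (Smap f : X → ℂ) =ᵐ[μ] fun x => χc x * (T (h₀ f) : X → ℂ) x :=
    fun f => (memS f).coeFn_toLp
  -- additivity
  have hadd : ∀ f f', Smap (f + f') = Smap f + Smap f' := by
    intro f f'
    have h1 : h₀ (f + f') = h₀ f + h₀ f' := by
      apply Lp.ext
      filter_upwards [h₀coe (f + f'), h₀coe f, h₀coe f', Lp.coeFn_add f f',
        Lp.coeFn_add (h₀ f) (h₀ f')] with x hx1 hx2 hx3 hx4 hx5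
      rw [hx1, hx5, Pi.add_apply, hx2, hx3, hx4, Pi.add_apply]
      ring
    have hT : T (h₀ (f + f')) = T (h₀ f) + T (h₀ f') := by rw [h1, map_add]
    apply Lp.ext
    filter_upwards [Sdef (f + f'), Sdef f, Sdef f', Lp.coeFn_add (Smap f) (Smap f'),
      Lp.coeFn_add (T (h₀ f)) (T (h₀ f'))] with x hx1 hx2 hx3 hx4 hx5
    rw [hx1, hT, hx5, Pi.add_apply, hx4, Pi.add_apply, hx2, hx3]
    ring
  have hsmul : ∀ (c : ℂ) (f : Lp ℂ 2 μ), Smap (c • f) = c • Smap f := by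
    intro c f
    have h1 : h₀ (c • f) = c • h₀ f := by
      apply Lp.ext
      filter_upwards [h₀coe (c • f), h₀coe f, Lp.coeFn_smul c f,
        Lp.coeFn_smul c (h₀ f)] with x hx1 hx2 hx3 hx4
      rw [hx1, hx4, Pi.smul_apply, hx2, hx3, Pi.smul_apply]
      simp [smul_eq_mul]
      ring
    have hT : T (h₀ (c • f)) = c • T (h₀ f) := by rw [h1, _root_.map_smul]
    apply Lp.ext
    filter_upwards [Sdef (c • f), Sdef f, Lp.coeFn_smul c (Smap f),
      Lp.coeFn_smul c (T (h₀ f))] with x hx1 hx2 hx3 hx4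
    rw [hx1, hT, hx4, Pi.smul_apply, hx3, Pi.smul_apply, hx2]
    simp [smul_eq_mul]
    ring
  -- boundedness
  have hbound : ∀ f, ‖Smap f‖ ≤ ‖T‖ * ‖f‖ := by
    intro f
    have hh₀ : ‖h₀ f‖ ≤ ‖f‖ := by
      have hnn : ‖h₀ f‖ = (eLpNorm (fun x => χc x * (f : X → ℂ) x) p μ).toReal :=
        Lp.norm_toLp _ _
      rw [hnn]
      have hfun1 : (χc • (f : X → ℂ)) = fun x => χc x * (f : X → ℂ) x := funext fun x => rfl
      have h1 : eLpNorm (fun x => χc x * (f : X → ℂ) x) p μ ≤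
          eLpNorm χc r μ * eLpNorm (f : X → ℂ) 2 μ := by
        rw [← hfun1]
        exact eLpNorm_smul_le_mul_eLpNorm (Lp.aestronglyMeasurable f) hχcm (hpqr := ⟨by simpa [one_div] using hp.symm⟩)
      rw [hχnorm, one_mul] at h1
      calc (eLpNorm (fun x => χc x * (f : X → ℂ) x) p μ).toReal
          ≤ (eLpNorm (f : X → ℂ) 2 μ).toReal :=
            ENNReal.toReal_mono (Lp.eLpNorm_ne_top f) h1
        _ = ‖f‖ := (Lp.norm_def f).symm
    have hnn2 : ‖Smap f‖ = (eLpNorm (fun x => χc x * (T (h₀ f) : X → ℂ) x) 2 μ).toReal :=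
      Lp.norm_toLp _ _
    rw [hnn2]
    have hfun2 : (χc • (T (h₀ f) : X → ℂ)) = fun x => χc x * (T (h₀ f) : X → ℂ) x :=
      funext fun x => rfl
    have h2 : eLpNorm (fun x => χc x * (T (h₀ f) : X → ℂ) x) 2 μ ≤
        eLpNorm χc r μ * eLpNorm (T (h₀ f) : X → ℂ) p' μ := by
      rw [← hfun2]
      exact eLpNorm_smul_le_mul_eLpNorm (Lp.aestronglyMeasurable _) hχcm (hpqr := ⟨by simpa [one_div] using hhold2.symm⟩)
    rw [hχnorm, one_mul] at h2
    calc (eLpNorm (fun x => χc x * (T (h₀ f) : X → ℂ) x) 2 μ).toReal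
        ≤ (eLpNorm (T (h₀ f) : X → ℂ) p' μ).toReal :=
          ENNReal.toReal_mono (Lp.eLpNorm_ne_top _) h2
      _ = ‖T (h₀ f)‖ := (Lp.norm_def _).symm
      _ ≤ ‖T‖ * ‖h₀ f‖ := T.le_opNorm _
      _ ≤ ‖T‖ * ‖f‖ := mul_le_mul_of_nonneg_left hh₀ (norm_nonneg T)
  let Slin : Lp ℂ 2 μ →ₗ[ℂ] Lp ℂ 2 μ :=
    { toFun := Smap, map_add' := hadd, map_smul' := hsmul }
  let S : Lp ℂ 2 μ →L[ℂ] Lp ℂ 2 μ := Slin.mkContinuous ‖T‖ hbound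
  have hSapp : ∀ f, S f = Smap f := fun f => rfl
  -- the characterizing property of S
  have hSprop : ∀ (f : Lp ℂ 2 μ) (h : Lp ℂ p μ),
      (h : X → ℂ) =ᵐ[μ] (fun x => χc x * (f : X → ℂ) x) →
      (S f : X → ℂ) =ᵐ[μ] (fun x => χc x * (T h : X → ℂ) x) := by
    intro f h hh
    have : h = h₀ f := Lp.ext (hh.trans (h₀coe f).symm)
    rw [this, hSapp]
    exact Sdef f
  -- construct the test function f₀
  set f₀ : X → ℂ := fun x => (g : X → ℂ) x * ((‖(g : X → ℂ) x‖ ^ (-e) : ℝ) : ℂ) with hf₀def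
  have hgf : ∀ x, χc x * f₀ x = (g : X → ℂ) x := by
    intro x
    show ((‖(g : X → ℂ) x‖ ^ e : ℝ) : ℂ) * ((g : X → ℂ) x * ((‖(g : X → ℂ) x‖ ^ (-e) : ℝ) : ℂ))
      = (g : X → ℂ) x
    by_cases hx : ‖(g : X → ℂ) x‖ = 0
    · have hg0 : (g : X → ℂ) x = 0 := norm_eq_zero.mp hx
      simp [hg0]
    · have hxpos : 0 < ‖(g : X → ℂ) x‖ := lt_of_le_of_ne (norm_nonneg _) (Ne.symm hx)
      have hinv : (‖(g : X → ℂ) x‖ ^ e) * (‖(g : X → ℂ) x‖ ^ (-e)) = 1 := by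
        rw [← Real.rpow_add hxpos]
        simp
      calc ((‖(g : X → ℂ) x‖ ^ e : ℝ) : ℂ) * ((g : X → ℂ) x * ((‖(g : X → ℂ) x‖ ^ (-e) : ℝ) : ℂ))
          = (((‖(g : X → ℂ) x‖ ^ e) * (‖(g : X → ℂ) x‖ ^ (-e)) : ℝ) : ℂ) * (g : X → ℂ) x := by
            push_cast; ring
        _ = (g : X → ℂ) x := by rw [hinv]; simp
  have hf₀m : AEStronglyMeasurable f₀ μ := by
    apply hgm.mul
    exact (Complex.measurable_ofReal.comp_aemeasurable
      (hgm.norm.aemeasurable.pow_const (-e))).aestronglyMeasurable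
  have hf₀pt : ∀ x, (‖f₀ x‖₊ : ℝ≥0∞) ^ (2:ℝ) = (‖(g : X → ℂ) x‖₊ : ℝ≥0∞) ^ a := by
    intro x
    rw [← enorm_eq_nnnorm, ← enorm_eq_nnnorm, ← ofReal_norm, ← ofReal_norm]
    rw [ENNReal.ofReal_rpow_of_nonneg (norm_nonneg _) (by norm_num : (0:ℝ) ≤ 2)]
    rw [ENNReal.ofReal_rpow_of_nonneg (norm_nonneg _) ha0.le]
    congr 1
    rw [hf₀def]
    by_cases hx : ‖(g : X → ℂ) x‖ = 0
    · have hg0 : (g : X → ℂ) x = 0 := norm_eq_zero.mp hx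
      simp [hg0, Real.zero_rpow ha0.ne', Real.zero_rpow (by norm_num : (2:ℝ) ≠ 0)]
    · have hxpos : 0 < ‖(g : X → ℂ) x‖ := lt_of_le_of_ne (norm_nonneg _) (Ne.symm hx)
      rw [norm_mul, Complex.norm_real, Real.norm_eq_abs,
        abs_of_nonneg (Real.rpow_nonneg (norm_nonneg _) _)]
      rw [show ‖(g : X → ℂ) x‖ * ‖(g : X → ℂ) x‖ ^ (-e) = ‖(g : X → ℂ) x‖ ^ (1 + (-e)) by
        rw [Real.rpow_add hxpos, Real.rpow_one]]
      rw [← Real.rpow_mul (norm_nonneg _)]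
      congr 1
      linarith [hexp]
  have hf₀mem : MemLp f₀ 2 μ := by
    refine ⟨hf₀m, ?_⟩
    rw [eLpNorm_eq_lintegral_rpow_enorm_toReal (by norm_num) (by norm_num)]; simp only [enorm_eq_nnnorm]
    have : (2:ℝ≥0∞).toReal = (2:ℝ) := by norm_num
    rw [this, lintegral_congr hf₀pt, hint]
    simp
  have hf₀norm : eLpNorm f₀ 2 μ = 1 := by
    rw [eLpNorm_eq_lintegral_rpow_enorm_toReal (by norm_num) (by norm_num)]; simp only [enorm_eq_nnnorm]
    have : (2:ℝ≥0∞).toReal = (2:ℝ) := by norm_num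
    rw [this, lintegral_congr hf₀pt, hint]
    simp
  let F₀ : Lp ℂ 2 μ := hf₀mem.toLp _
  have hF₀coe : (F₀ : X → ℂ) =ᵐ[μ] f₀ := hf₀mem.coeFn_toLp
  have hF₀norm : ‖F₀‖ = 1 := by
    have hnn : ‖F₀‖ = (eLpNorm f₀ 2 μ).toReal := Lp.norm_toLp _ _
    rw [hnn, hf₀norm]
    simp
  -- g = χ · F₀ a.e.
  have hgF₀ : (g : X → ℂ) =ᵐ[μ] fun x => χc x * (F₀ : X → ℂ) x := by
    filter_upwards [hF₀coe] with x hx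
    rw [hx, hgf]
  have hSF₀ : (S F₀ : X → ℂ) =ᵐ[μ] fun x => χc x * (T g : X → ℂ) x := hSprop F₀ g hgF₀
  -- the inner product computation
  have hinner : (inner ℂ F₀ (S F₀) : ℂ) = ∫ x, (starRingEnd ℂ) ((g : X → ℂ) x) * (T g : X → ℂ) x ∂μ := by
    rw [L2.inner_def]
    apply integral_congr_ae
    filter_upwards [hF₀coe, hSF₀] with x hx1 hx2
    rw [RCLike.inner_apply, hx1, hx2]
    rw [← hgf x]
    rw [hχcdef]
    simp only [map_mul, Complex.conj_ofReal]
    ring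
  -- conclude
  refine ⟨χ, hχnonneg, hχmem, hχnorm, hmul, S, hSprop, ?_⟩
  rw [← hinner]
  have h1 : ‖(inner ℂ F₀ (S F₀) : ℂ)‖ ≤ ‖F₀‖ * ‖S F₀‖ := by
    simpa using norm_inner_le_norm (𝕜 := ℂ) F₀ (S F₀)
  have h2 : ‖S F₀‖ ≤ ‖S‖ * ‖F₀‖ := S.le_opNorm F₀
  rw [hF₀norm] at h1 h2
  simpa using h1.trans (by simpa using h2)
end

section
/- Let (X, μ) be a finite measure space, let 1 ≤ q < ∞, and define p by 1/p = 1/(2q) + 1/2 (so 1 ≤ p < 2 and L^2(μ) ⊆ L^p(μ)). Let P : L^2(μ) → L^2(μ) be an orthogonal projection (a bounded self-adjoint operator with P ∘ P = P). Then for every g ∈ L^2(μ) with ‖g‖_{L^p} = 1 there exists a nonnegative χ ∈ L^{2q}(μ) with ‖χ‖_{L^{2q}} = 1 such that the bounded operator f ↦ χ·P(χ·f) on L^2(μ) has operator norm at least ‖P g‖_{L^2}^2. -/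
open MeasureTheory Filter
open scoped ENNReal ComplexConjugate

section Helpers

variable {X : Type*} [MeasurableSpace X] {μ : Measure X} [IsFiniteMeasure μ]

private theorem exists_mul_op (P : Lp ℂ 2 μ →L[ℂ] Lp ℂ 2 μ) (χ : X → ℝ) (C : ℝ) (hC : 0 ≤ C)
    (hmem : ∀ f : Lp ℂ 2 μ, MemLp (fun x => (χ x : ℂ) * (P f : X → ℂ) x) 2 μ)
    (hb : ∀ f : Lp ℂ 2 μ,
      eLpNorm (fun x => (χ x : ℂ) * (P f : X → ℂ) x) 2 μ ≤ ENNReal.ofReal (C * ‖f‖)) :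
    ∃ T : Lp ℂ 2 μ →L[ℂ] Lp ℂ 2 μ,
      ∀ f : Lp ℂ 2 μ, (T f : X → ℂ) =ᵐ[μ] fun x => (χ x : ℂ) * (P f : X → ℂ) x := by
  classical
  let L : Lp ℂ 2 μ →ₗ[ℂ] Lp ℂ 2 μ :=
    { toFun := fun f => (hmem f).toLp _
      map_add' := by
        intro f f'
        rw [← MemLp.toLp_add]
        apply MemLp.toLp_congr
        have h1 : (P (f + f') : X → ℂ) =ᵐ[μ] fun x => (P f : X → ℂ) x + (P f' : X → ℂ) x := by
          rw [map_add]; exact Lp.coeFn_add _ _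
        filter_upwards [h1] with x hx
        simp only [hx, Pi.add_apply, mul_add]
      map_smul' := by
        intro c f
        simp only [RingHom.id_apply]
        have h0 : (P (c • f) : X → ℂ) =ᵐ[μ] c • ((P f : X → ℂ)) := by
          rw [ContinuousLinearMap.map_smul]; exact Lp.coeFn_smul _ _
        have h1 : (fun x => (χ x : ℂ) * (P (c • f) : X → ℂ) x) =ᵐ[μ]
            c • fun x => (χ x : ℂ) * (P f : X → ℂ) x := by
          filter_upwards [h0] with x hx
          simp only [hx, Pi.smul_apply, smul_eq_mul]
          ring
        exact (MemLp.toLp_congr (hmem (c • f)) ((hmem f).const_smul c) h1).trans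
          (MemLp.toLp_const_smul c (hmem f)) }
  refine ⟨L.mkContinuous C ?_, fun f => (hmem f).coeFn_toLp⟩
  intro f
  show ‖(hmem f).toLp _‖ ≤ C * ‖f‖
  rw [Lp.norm_toLp]
  calc (eLpNorm (fun x => (χ x : ℂ) * (P f : X → ℂ) x) 2 μ).toReal
      ≤ (ENNReal.ofReal (C * ‖f‖)).toReal :=
        ENNReal.toReal_mono ENNReal.ofReal_ne_top (hb f)
    _ = C * ‖f‖ := ENNReal.toReal_ofReal (by positivity)

private theorem adjoint_eq (P : Lp ℂ 2 μ →L[ℂ] Lp ℂ 2 μ)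
    (hsa : ∀ f h : Lp ℂ 2 μ, inner ℂ (P f) h = (inner ℂ f (P h) : ℂ))
    (χ : X → ℝ) (T : Lp ℂ 2 μ →L[ℂ] Lp ℂ 2 μ)
    (hT : ∀ f : Lp ℂ 2 μ, (T f : X → ℂ) =ᵐ[μ] fun x => (χ x : ℂ) * (P f : X → ℂ) x)
    (k h : Lp ℂ 2 μ) (hm : (h : X → ℂ) =ᵐ[μ] fun x => (χ x : ℂ) * (k : X → ℂ) x) :
    ContinuousLinearMap.adjoint T k = P h := by
  apply ext_inner_right ℂ
  intro w
  rw [ContinuousLinearMap.adjoint_inner_left, hsa h w]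
  rw [L2.inner_def, L2.inner_def]
  apply integral_congr_ae
  filter_upwards [hT w, hm] with x hx1 hx2
  simp only [RCLike.inner_apply, hx1, hx2, map_mul, Complex.conj_ofReal]
  ring

private theorem final_step (P : Lp ℂ 2 μ →L[ℂ] Lp ℂ 2 μ)
    (hsa : ∀ f h : Lp ℂ 2 μ, inner ℂ (P f) h = (inner ℂ f (P h) : ℂ))
    (hidem : ∀ f : Lp ℂ 2 μ, P (P f) = P f)
    (g : Lp ℂ 2 μ) (χ : X → ℝ) (T : Lp ℂ 2 μ →L[ℂ] Lp ℂ 2 μ)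
    (hT : ∀ f : Lp ℂ 2 μ, (T f : X → ℂ) =ᵐ[μ] fun x => (χ x : ℂ) * (P f : X → ℂ) x)
    (hlow : ‖P g‖ ≤ ‖T‖) :
    ∃ S : Lp ℂ 2 μ →L[ℂ] Lp ℂ 2 μ,
      (∀ (f h : Lp ℂ 2 μ), (h : X → ℂ) =ᵐ[μ] (fun x => (χ x : ℂ) * f x) →
        (S f : X → ℂ) =ᵐ[μ] (fun x => (χ x : ℂ) * (P h) x)) ∧
      ‖P g‖ ^ 2 ≤ ‖S‖ := by
  refine ⟨T ∘L ContinuousLinearMap.adjoint T, ?_, ?_⟩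
  · intro f h hm
    have h1 : ContinuousLinearMap.adjoint T f = P h := adjoint_eq P hsa χ T hT f h hm
    have h2 : (T ∘L ContinuousLinearMap.adjoint T) f = T (P h) := by
      rw [ContinuousLinearMap.comp_apply, h1]
    rw [h2]
    have h3 := hT (P h)
    rw [hidem h] at h3
    exact h3
  · have hn : ‖T ∘L ContinuousLinearMap.adjoint T‖ = ‖T‖ * ‖T‖ := by
      have h4 := ContinuousLinearMap.norm_adjoint_comp_self (ContinuousLinearMap.adjoint T)
      rwa [ContinuousLinearMap.adjoint_adjoint, LinearIsometryEquiv.norm_map] at h4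
    rw [hn, pow_two]
    exact mul_le_mul hlow hlow (norm_nonneg _) (norm_nonneg _)

end Helpers

/-- **Abstract Lemma 3.1.** Let `(X, μ)` be a finite measure space, `1 ≤ q < ∞`,
`1/p = 1/(2q) + 1/2`, and let `P` be an orthogonal projection on `L^2(μ)`. For every
`g ∈ L^2` with `‖g‖_{L^p} = 1` there is a nonnegative normalized `χ ∈ L^{2q}` such that
the bounded operator `f ↦ χ·P(χ·f)` on `L^2` has norm at least `‖P g‖_{L^2}^2`. -/
theorem stmt_13 {X : Type*} [MeasurableSpace X] (μ : Measure X) [IsFiniteMeasure μ]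
    (q p : ℝ) (hq : 1 ≤ q) (hp : 1 / p = 1 / (2 * q) + 1 / 2)
    (P : Lp ℂ 2 μ →L[ℂ] Lp ℂ 2 μ)
    (hsa : ∀ f h : Lp ℂ 2 μ, inner ℂ (P f) h = (inner ℂ f (P h) : ℂ))
    (hidem : ∀ f : Lp ℂ 2 μ, P (P f) = P f)
    (g : Lp ℂ 2 μ) (hg1 : eLpNorm (g : X → ℂ) (ENNReal.ofReal p) μ = 1) :
    ∃ χ : X → ℝ, (∀ x, 0 ≤ χ x) ∧
      MemLp (fun x => (χ x : ℂ)) (ENNReal.ofReal (2 * q)) μ ∧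
      eLpNorm (fun x => (χ x : ℂ)) (ENNReal.ofReal (2 * q)) μ = 1 ∧
      ∃ S : Lp ℂ 2 μ →L[ℂ] Lp ℂ 2 μ,
        (∀ (f h : Lp ℂ 2 μ), (h : X → ℂ) =ᵐ[μ] (fun x => (χ x : ℂ) * f x) →
          (S f : X → ℂ) =ᵐ[μ] (fun x => (χ x : ℂ) * (P h) x)) ∧
        ‖P g‖ ^ 2 ≤ ‖S‖ := by
  classical
  have hq0 : 0 < q := lt_of_lt_of_le one_pos hq
  have h2q : 0 < 2 * q := by linarith
  have hp0 : 0 < p := by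
    have h1 : 0 < 1 / p := by rw [hp]; positivity
    exact one_div_pos.mp h1
  have hkey : p / (2 * q) + p / 2 = 1 := by
    have h1 : p * (1 / p) = 1 := mul_one_div_cancel hp0.ne'
    calc p / (2 * q) + p / 2 = p * (1 / (2 * q) + 1 / 2) := by ring
      _ = p * (1 / p) := by rw [← hp]
      _ = 1 := h1
  have hexp1 : 0 < p / (2 * q) := by positivity
  have hexp2 : 0 < p / 2 := by positivity
  -- the extremal weight
  set χ₀ : X → ℝ := fun x => ‖(g : X → ℂ) x‖ ^ (p / (2 * q)) with hχ₀def
  have hχ₀nonneg : ∀ x, 0 ≤ χ₀ x := fun x => Real.rpow_nonneg (norm_nonneg _) _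
  have hgmeas : Measurable fun x => ‖(g : X → ℂ) x‖ := (Lp.stronglyMeasurable g).measurable.norm
  have hχ₀meas : Measurable χ₀ := hgmeas.pow measurable_const
  have hχ₀cmeas : AEStronglyMeasurable (fun x => (χ₀ x : ℂ)) μ :=
    (Complex.measurable_ofReal.comp hχ₀meas).stronglyMeasurable.aestronglyMeasurable
  have hofReal : (ENNReal.ofReal (2 * q)) * ENNReal.ofReal (p / (2 * q)) = ENNReal.ofReal p := by
    rw [← ENNReal.ofReal_mul h2q.le]
    congr 1
    field_simp
  have hχ₀norm : eLpNorm (fun x => (χ₀ x : ℂ)) (ENNReal.ofReal (2 * q)) μ = 1 := by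
    have h1 : ∀ᵐ x ∂μ, ‖(χ₀ x : ℂ)‖ = ‖‖(g : X → ℂ) x‖ ^ (p / (2 * q))‖ := by
      filter_upwards with x
      rw [Complex.norm_real]
    rw [eLpNorm_congr_norm_ae h1, eLpNorm_norm_rpow _ hexp1, hofReal, hg1, ENNReal.one_rpow]
  have hχ₀mem : MemLp (fun x => (χ₀ x : ℂ)) (ENNReal.ofReal (2 * q)) μ :=
    ⟨hχ₀cmeas, by rw [hχ₀norm]; exact ENNReal.one_lt_top⟩
  -- the extremal vector
  set f₀ : X → ℂ := fun x => (g : X → ℂ) x * ((‖(g : X → ℂ) x‖ ^ (p / 2 - 1) : ℝ) : ℂ)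
    with hf₀def
  have hfactor : ∀ x, (χ₀ x : ℂ) * f₀ x = (g : X → ℂ) x := by
    intro x
    by_cases hx : (g : X → ℂ) x = 0
    · simp [hf₀def, hx]
    · have hnx : 0 < ‖(g : X → ℂ) x‖ := norm_pos_iff.mpr hx
      have h1 : χ₀ x * ‖(g : X → ℂ) x‖ ^ (p / 2 - 1) = 1 := by
        rw [hχ₀def]
        rw [← Real.rpow_add hnx]
        rw [show p / (2 * q) + (p / 2 - 1) = 0 by linarith]
        exact Real.rpow_zero _
      calc (χ₀ x : ℂ) * f₀ x
          = (g : X → ℂ) x * ((χ₀ x * ‖(g : X → ℂ) x‖ ^ (p / 2 - 1) : ℝ) : ℂ) := by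
            push_cast; ring
        _ = (g : X → ℂ) x := by rw [h1]; simp
  have hf₀norm_eq : ∀ᵐ x ∂μ, ‖f₀ x‖ = ‖‖(g : X → ℂ) x‖ ^ (p / 2)‖ := by
    filter_upwards with x
    by_cases hx : (g : X → ℂ) x = 0
    · simp [hf₀def, hx, Real.zero_rpow hexp2.ne']
    · have hnx : 0 < ‖(g : X → ℂ) x‖ := norm_pos_iff.mpr hx
      rw [hf₀def]
      have h2 : ‖(‖(g : X → ℂ) x‖ ^ (p / 2))‖ = ‖(g : X → ℂ) x‖ ^ (p / 2) :=
        Real.norm_of_nonneg (Real.rpow_nonneg (norm_nonneg _) _)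
      rw [h2, norm_mul, Complex.norm_real,
        Real.norm_of_nonneg (Real.rpow_nonneg (norm_nonneg _) _),
        show (p / 2 : ℝ) = 1 + (p / 2 - 1) by ring, Real.rpow_add hnx, Real.rpow_one]
      congr 1
      ring
  have htwo : (2 : ℝ≥0∞) * ENNReal.ofReal (p / 2) = ENNReal.ofReal p := by
    rw [show (2 : ℝ≥0∞) = ENNReal.ofReal 2 by simp, ← ENNReal.ofReal_mul (by norm_num)]
    congr 1
    ring
  have hf₀snorm : eLpNorm f₀ 2 μ = 1 := by
    rw [eLpNorm_congr_norm_ae hf₀norm_eq, eLpNorm_norm_rpow _ hexp2, htwo, hg1, ENNReal.one_rpow]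
  have hf₀meas : AEStronglyMeasurable f₀ μ := by
    apply AEStronglyMeasurable.mul (Lp.aestronglyMeasurable g)
    exact (Complex.measurable_ofReal.comp
      (hgmeas.pow measurable_const)).stronglyMeasurable.aestronglyMeasurable
  have hf₀mem : MemLp f₀ 2 μ := ⟨hf₀meas, by rw [hf₀snorm]; exact ENNReal.one_lt_top⟩
  set fL : Lp ℂ 2 μ := hf₀mem.toLp f₀ with hfLdef
  have hfLnorm : ‖fL‖ = 1 := by
    rw [hfLdef, Lp.norm_toLp, hf₀snorm, ENNReal.toReal_one]
  have hgfact : (g : X → ℂ) =ᵐ[μ] fun x => (χ₀ x : ℂ) * (fL : X → ℂ) x := by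
    filter_upwards [hf₀mem.coeFn_toLp] with x hx
    rw [hx, hfactor x]
  -- truncations
  set ψ : ℕ → X → ℝ := fun n x => min (χ₀ x) (n + 1) with hψdef
  have hψnonneg : ∀ n x, 0 ≤ ψ n x := fun n x => le_min (hχ₀nonneg x) (by positivity)
  have hψle : ∀ n x, ψ n x ≤ χ₀ x := fun n x => min_le_left _ _
  have hψmeas : ∀ n, Measurable (ψ n) := fun n => hχ₀meas.min measurable_const
  have hψcmeas : ∀ n, AEStronglyMeasurable (fun x => (ψ n x : ℂ)) μ := fun n =>
    (Complex.measurable_ofReal.comp (hψmeas n)).stronglyMeasurable.aestronglyMeasurable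
  have hψnorm_le : ∀ n, eLpNorm (fun x => (ψ n x : ℂ)) (ENNReal.ofReal (2 * q)) μ ≤ 1 := by
    intro n
    rw [← hχ₀norm]
    apply eLpNorm_mono_ae
    filter_upwards with x
    simp only [Complex.norm_real, Real.norm_eq_abs,
      abs_of_nonneg (hψnonneg n x), abs_of_nonneg (hχ₀nonneg x)]
    exact hψle n x
  have hψnorm_ne_top : ∀ n, eLpNorm (fun x => (ψ n x : ℂ)) (ENNReal.ofReal (2 * q)) μ ≠ ∞ :=
    fun n => ne_top_of_le_ne_top ENNReal.one_ne_top (hψnorm_le n)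
  set c : ℕ → ℝ := fun n => (eLpNorm (fun x => (ψ n x : ℂ)) (ENNReal.ofReal (2 * q)) μ).toReal
    with hcdef
  have hcle1 : ∀ n, c n ≤ 1 := by
    intro n
    have := ENNReal.toReal_mono ENNReal.one_ne_top (hψnorm_le n)
    rw [ENNReal.toReal_one] at this; exact this
  have hcpos : ∀ n, 0 < c n := by
    intro n
    apply ENNReal.toReal_pos _ (hψnorm_ne_top n)
    intro h0
    rw [eLpNorm_eq_zero_iff (hψcmeas n) (by simp [h2q, hq0]) ] at h0
    have hzero : (fun x => (χ₀ x : ℂ)) =ᵐ[μ] 0 := by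
      filter_upwards [h0] with x hx
      simp only [Pi.zero_apply, Complex.ofReal_eq_zero] at hx ⊢
      have : min (χ₀ x) (n + 1) = 0 := hx
      rcases min_eq_iff.mp this with h | h
      · exact_mod_cast h.1
      · exfalso; nlinarith [h.1]
    rw [eLpNorm_congr_ae hzero, eLpNorm_zero] at hχ₀norm
    exact zero_ne_one hχ₀norm
  -- normalized truncations
  set χn : ℕ → X → ℝ := fun n x => (c n)⁻¹ * ψ n x with hχndef
  have hχn_nonneg : ∀ n x, 0 ≤ χn n x := fun n x =>
    mul_nonneg (inv_nonneg.mpr (hcpos n).le) (hψnonneg n x)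
  have hχn_smul : ∀ n, (fun x => (χn n x : ℂ)) = (((c n)⁻¹ : ℝ) : ℂ) • fun x => (ψ n x : ℂ) := by
    intro n
    funext x
    simp only [hχndef, Pi.smul_apply, smul_eq_mul]
    push_cast
    ring
  have hχn_norm : ∀ n, eLpNorm (fun x => (χn n x : ℂ)) (ENNReal.ofReal (2 * q)) μ = 1 := by
    intro n
    rw [hχn_smul n, eLpNorm_const_smul]
    have h1 : (‖(((c n)⁻¹ : ℝ) : ℂ)‖ₑ) = ENNReal.ofReal (c n)⁻¹ := by
      rw [← ofReal_norm, Complex.norm_real, Real.norm_eq_abs,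
        abs_of_nonneg (inv_nonneg.mpr (hcpos n).le)]
    have h2 : eLpNorm (fun x => (ψ n x : ℂ)) (ENNReal.ofReal (2 * q)) μ = ENNReal.ofReal (c n) :=
      (ENNReal.ofReal_toReal (hψnorm_ne_top n)).symm
    rw [h1, h2, ← ENNReal.ofReal_mul (inv_nonneg.mpr (hcpos n).le),
      inv_mul_cancel₀ (hcpos n).ne', ENNReal.ofReal_one]
  have hχn_mem : ∀ n, MemLp (fun x => (χn n x : ℂ)) (ENNReal.ofReal (2 * q)) μ := by
    intro n
    refine ⟨?_, by rw [hχn_norm n]; exact ENNReal.one_lt_top⟩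
    exact (Complex.measurable_ofReal.comp
      ((hψmeas n).const_mul _)).stronglyMeasurable.aestronglyMeasurable
  have hχn_bdd : ∀ n x, χn n x ≤ (c n)⁻¹ * (n + 1) := by
    intro n x
    exact mul_le_mul_of_nonneg_left (min_le_right _ _) (inv_nonneg.mpr (hcpos n).le)
  -- the operators for truncated weights
  have hTn : ∀ n : ℕ, ∃ T : Lp ℂ 2 μ →L[ℂ] Lp ℂ 2 μ,
      ∀ f : Lp ℂ 2 μ, (T f : X → ℂ) =ᵐ[μ] fun x => (χn n x : ℂ) * (P f : X → ℂ) x := by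
    intro n
    set K : ℝ := (c n)⁻¹ * (n + 1) with hKdef
    have hK0 : 0 ≤ K := by positivity
    have hptw : ∀ f : Lp ℂ 2 μ, ∀ᵐ x ∂μ,
        ‖(χn n x : ℂ) * (P f : X → ℂ) x‖ ≤ ‖(K : ℂ) * (P f : X → ℂ) x‖ := by
      intro f
      filter_upwards with x
      rw [norm_mul, norm_mul, Complex.norm_real, Complex.norm_real, Real.norm_eq_abs,
        Real.norm_eq_abs, abs_of_nonneg (hχn_nonneg n x), abs_of_nonneg hK0]
      exact mul_le_mul_of_nonneg_right (hχn_bdd n x) (norm_nonneg _)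
    have hmeasn : ∀ f : Lp ℂ 2 μ,
        AEStronglyMeasurable (fun x => (χn n x : ℂ) * (P f : X → ℂ) x) μ := by
      intro f
      exact ((Complex.measurable_ofReal.comp
        ((hψmeas n).const_mul _)).stronglyMeasurable.aestronglyMeasurable).mul
        (Lp.aestronglyMeasurable (P f))
    apply exists_mul_op P (χn n) (K * ‖P‖) (by positivity)
    · intro f
      refine MemLp.of_le (((Lp.memLp (P f)).const_mul (K : ℂ))) (hmeasn f) (hptw f)
    · intro f
      calc eLpNorm (fun x => (χn n x : ℂ) * (P f : X → ℂ) x) 2 μ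
          ≤ eLpNorm (fun x => (K : ℂ) * (P f : X → ℂ) x) 2 μ := eLpNorm_mono_ae (hptw f)
        _ = ‖(K : ℂ)‖ₑ * eLpNorm (P f : X → ℂ) 2 μ := by
            rw [show (fun x => (K : ℂ) * (P f : X → ℂ) x) = (K : ℂ) • ((P f : X → ℂ))
              from funext fun x => rfl]
            exact eLpNorm_const_smul _ _ _ _
        _ = ENNReal.ofReal K * ENNReal.ofReal ‖P f‖ := by
            rw [← ofReal_norm, Complex.norm_real, Real.norm_eq_abs,
              abs_of_nonneg hK0, Lp.norm_def,
              ENNReal.ofReal_toReal (Lp.eLpNorm_ne_top (P f))]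
        _ ≤ ENNReal.ofReal K * ENNReal.ofReal (‖P‖ * ‖f‖) := by
            gcongr
            exact P.le_opNorm f
        _ = ENNReal.ofReal (K * ‖P‖ * ‖f‖) := by
            rw [← ENNReal.ofReal_mul hK0]
            congr 1
            ring
  choose Tn hTnspec using hTn
  by_cases hA : ∃ n : ℕ, ‖P g‖ ≤ ‖Tn n‖
  · -- Case A: some truncated operator is already large
    obtain ⟨n, hn⟩ := hA
    exact ⟨χn n, hχn_nonneg n, hχn_mem n, hχn_norm n,
      final_step P hsa hidem g (χn n) (Tn n) (hTnspec n) hn⟩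
  · -- Case B: all truncated operators are small; the full weight works
    push_neg at hA
    have hbound : ∀ f : Lp ℂ 2 μ,
        eLpNorm (fun x => (χ₀ x : ℂ) * (P f : X → ℂ) x) 2 μ ≤
          ENNReal.ofReal (‖P g‖ * ‖f‖) := by
      intro f
      have hboundn : ∀ n : ℕ, eLpNorm (fun x => (ψ n x : ℂ) * (P f : X → ℂ) x) 2 μ ≤
          ENNReal.ofReal (‖P g‖ * ‖f‖) := by
        intro n
        have hψleχn : ∀ x, ψ n x ≤ χn n x := by
          intro x
          rw [hχndef]
          exact le_mul_of_one_le_left (hψnonneg n x)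
            ((one_le_inv₀ (hcpos n)).mpr (hcle1 n))
        calc eLpNorm (fun x => (ψ n x : ℂ) * (P f : X → ℂ) x) 2 μ
            ≤ eLpNorm (fun x => (χn n x : ℂ) * (P f : X → ℂ) x) 2 μ := by
              apply eLpNorm_mono_ae
              filter_upwards with x
              rw [norm_mul, norm_mul, Complex.norm_real, Complex.norm_real,
                Real.norm_eq_abs, Real.norm_eq_abs, abs_of_nonneg (hψnonneg n x),
                abs_of_nonneg (hχn_nonneg n x)]
              exact mul_le_mul_of_nonneg_right (hψleχn x) (norm_nonneg _)
          _ = eLpNorm (Tn n f : X → ℂ) 2 μ := (eLpNorm_congr_ae (hTnspec n f)).symm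
          _ = ENNReal.ofReal ‖Tn n f‖ := by
              rw [Lp.norm_def, ENNReal.ofReal_toReal (Lp.eLpNorm_ne_top _)]
          _ ≤ ENNReal.ofReal (‖P g‖ * ‖f‖) := by
              apply ENNReal.ofReal_le_ofReal
              calc ‖Tn n f‖ ≤ ‖Tn n‖ * ‖f‖ := (Tn n).le_opNorm f
                _ ≤ ‖P g‖ * ‖f‖ :=
                    mul_le_mul_of_nonneg_right (hA n).le (norm_nonneg _)
      have htends : ∀ᵐ x ∂μ, Tendsto (fun n => (ψ n x : ℂ) * (P f : X → ℂ) x) atTop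
          (nhds ((χ₀ x : ℂ) * (P f : X → ℂ) x)) := by
        filter_upwards with x
        apply tendsto_atTop_of_eventually_const (i₀ := ⌈χ₀ x⌉₊)
        intro n hn
        have : ψ n x = χ₀ x := by
          apply min_eq_left
          calc χ₀ x ≤ ⌈χ₀ x⌉₊ := Nat.le_ceil _
            _ ≤ (n : ℝ) := by exact_mod_cast hn
            _ ≤ n + 1 := by linarith
        rw [this]
      have hlim := Lp.eLpNorm_lim_le_liminf_eLpNorm (p := (2 : ℝ≥0∞))
        (f := fun n x => (ψ n x : ℂ) * (P f : X → ℂ) x)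
        (fun n => ((hψcmeas n).mul (Lp.aestronglyMeasurable (P f))))
        (fun x => (χ₀ x : ℂ) * (P f : X → ℂ) x) htends
      refine le_trans hlim ?_
      calc atTop.liminf (fun n => eLpNorm (fun x => (ψ n x : ℂ) * (P f : X → ℂ) x) 2 μ)
          ≤ atTop.liminf (fun _ : ℕ => ENNReal.ofReal (‖P g‖ * ‖f‖)) :=
            Filter.liminf_le_liminf (Filter.Eventually.of_forall hboundn)
        _ = ENNReal.ofReal (‖P g‖ * ‖f‖) := Filter.liminf_const _
    have hmemB : ∀ f : Lp ℂ 2 μ,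
        MemLp (fun x => (χ₀ x : ℂ) * (P f : X → ℂ) x) 2 μ := by
      intro f
      refine ⟨hχ₀cmeas.mul (Lp.aestronglyMeasurable (P f)), ?_⟩
      exact lt_of_le_of_lt (hbound f) ENNReal.ofReal_lt_top
    obtain ⟨T, hT⟩ := exists_mul_op P χ₀ ‖P g‖ (norm_nonneg _) hmemB hbound
    have hadj : ContinuousLinearMap.adjoint T fL = P g :=
      adjoint_eq P hsa χ₀ T hT fL g hgfact
    have hlow : ‖P g‖ ≤ ‖T‖ := by
      calc ‖P g‖ = ‖ContinuousLinearMap.adjoint T fL‖ := by rw [hadj]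
        _ ≤ ‖ContinuousLinearMap.adjoint T‖ * ‖fL‖ := ContinuousLinearMap.le_opNorm _ _
        _ = ‖T‖ := by rw [hfLnorm, mul_one, LinearIsometryEquiv.norm_map]
    exact ⟨χ₀, hχ₀nonneg, hχ₀mem, hχ₀norm,
      final_step P hsa hidem g χ₀ T hT hlow⟩
end

section
/- Let n ≥ 2 be an integer, let q be a real number with n/2 < q < ∞, and set σ = σ(q), where σ(q) = n/(2q) − 1/2 if n/2 ≤ q ≤ (n+1)/2 and σ(q) = (n−1)/(4q) if q ≥ (n+1)/2. Let (λ_k)_{k≥0} be an arbitrary sequence of nonnegative real numbers, and let A ≥ 0, C > 0. Suppose (z_L)_{L≥1} is a sequence of complex numbers converging to some z ∈ ℂ such that for every integer L ≥ 1 there exists k with |z_L − L^{−2} λ_k^2| ≤ C L^{−2} (1 + λ_k)^{2σ} L^{2 − n/q} A. Then z ∈ [0, ∞). -/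
open Filter
open scoped Topology

set_option maxHeartbeats 1000000 in
/-- **Scaling lemma, part 1.** Let `n ≥ 2`, `n/2 < q < ∞`, and let `σ = σ(q)` be
given piecewise by `n/(2q) − 1/2` for `q ≤ (n+1)/2` and `(n−1)/(4q)` for
`q ≥ (n+1)/2`. If a convergent sequence `(z_L)` satisfies, for every `L ≥ 1`,
`|z_L − L^{−2} λ_k^2| ≤ C L^{−2} (1+λ_k)^{2σ} L^{2−n/q} A` for some `k`, then its
limit lies in `[0, ∞)`. -/
theorem stmt_16 (n : ℕ) (hn : 2 ≤ n) (q : ℝ) (hq : (n : ℝ) / 2 < q)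
    (σ : ℝ) (hσ : σ = if q ≤ ((n : ℝ) + 1) / 2 then (n : ℝ) / (2 * q) - 1 / 2
      else ((n : ℝ) - 1) / (4 * q))
    (lam : ℕ → ℝ) (hlam : ∀ k, 0 ≤ lam k)
    (A C : ℝ) (hA : 0 ≤ A) (hC : 0 < C)
    (z : ℕ → ℂ) (w : ℂ) (hconv : Tendsto z atTop (𝓝 w))
    (hmem : ∀ L : ℕ, 1 ≤ L → ∃ k : ℕ,
      ‖z L - ((lam k ^ 2 / (L : ℝ) ^ 2 : ℝ) : ℂ)‖ ≤
        C * (1 + lam k) ^ (2 * σ) * (L : ℝ) ^ (2 - (n : ℝ) / q) * A / (L : ℝ) ^ 2) :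
    w.im = 0 ∧ 0 ≤ w.re := by
  have hn' : (2:ℝ) ≤ (n:ℝ) := by exact_mod_cast hn
  have hq0 : 0 < q := lt_trans (by linarith) hq
  have h2q : (n:ℝ) < 2*q := by linarith
  have hnq2 : (n:ℝ)/q < 2 := (div_lt_iff₀ hq0).2 (by linarith)
  have hnq0 : 0 < (n:ℝ)/q := div_pos (by linarith) hq0
  have hσ0 : 0 ≤ σ := by
    rw [hσ]; split_ifs with h
    · rw [sub_nonneg, div_le_div_iff₀ (by norm_num) (by positivity)]
      linarith
    · exact div_nonneg (by linarith) (by positivity)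
  have hσ2 : 2*σ ≤ 1 := by
    rw [hσ]; split_ifs with h
    · have : (n:ℝ)/(2*q) ≤ 1 := by rw [div_le_one (by positivity)]; linarith
      linarith
    · have : ((n:ℝ)-1)/(4*q) ≤ 1/2 := by
        rw [div_le_div_iff₀ (by positivity) (by norm_num)]; linarith
      linarith
  have he : 4*σ - (n:ℝ)/q < 0 := by
    rw [hσ]; split_ifs with h
    · have h1 : 4*((n:ℝ)/(2*q) - 1/2) - (n:ℝ)/q = (n:ℝ)/q - 2 := by
        field_simp; ring
      rw [h1]; linarith
    · have h1 : 4*(((n:ℝ)-1)/(4*q)) - (n:ℝ)/q = -(1/q) := by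
        field_simp; ring
      rw [h1]; simp; positivity
  -- boundedness of the sequence
  have habs : Tendsto (fun L => ‖z L‖) atTop (𝓝 ‖w‖) :=
    (continuous_norm.tendsto w).comp hconv
  obtain ⟨M, hM⟩ := habs.bddAbove_range
  have hM' : ∀ L, ‖z L‖ ≤ M := fun L => hM ⟨L, rfl⟩
  have hM0 : 0 ≤ M := le_trans (norm_nonneg _) (hM' 0)
  set M' : ℝ := M + C*A + 1 with hM'def
  set B : ℝ := 1 + 2*M' with hBdef
  have hM'1 : (1:ℝ) ≤ M' := by
    have : 0 ≤ C*A := mul_nonneg hC.le hA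
    simp only [hM'def]; linarith
  have hB1 : (1:ℝ) ≤ B := by simp only [hBdef]; linarith
  set K : ℝ := C*A*(1+B)^(2*σ) with hKdef
  have hK0 : 0 ≤ K := by positivity
  -- key pointwise estimate
  have hkey : ∀ L : ℕ, 1 ≤ L →
      |(z L).im| ≤ K * (L:ℝ)^(4*σ - (n:ℝ)/q) ∧
      -(K * (L:ℝ)^(4*σ - (n:ℝ)/q)) ≤ (z L).re := by
    intro L hL
    obtain ⟨k, hE⟩ := hmem L hL
    set l : ℝ := lam k with hldef
    set Lr : ℝ := (L:ℝ) with hLrdef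
    have hLr1 : (1:ℝ) ≤ Lr := Nat.one_le_cast.mpr hL
    have hLr0 : (0:ℝ) < Lr := by linarith
    have hl0 : 0 ≤ l := hlam k
    have h1l : (1:ℝ) ≤ 1 + l := by linarith
    set Eb : ℝ := C * (1 + l) ^ (2 * σ) * Lr ^ (2 - (n:ℝ) / q) * A / Lr ^ 2 with hEbdef
    have hEb0 : 0 ≤ Eb := by positivity
    -- |re - x| ≤ Eb and |im| ≤ Eb
    have hre : |(z L).re - l^2/Lr^2| ≤ Eb := by
      have h2 := (Complex.abs_re_le_norm (z L - ((l^2/Lr^2 : ℝ) : ℂ))).trans hE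
      simpa only [Complex.sub_re, Complex.ofReal_re] using h2
    have him : |(z L).im| ≤ Eb := by
      have h2 := (Complex.abs_im_le_norm (z L - ((l^2/Lr^2 : ℝ) : ℂ))).trans hE
      simpa only [Complex.sub_im, Complex.ofReal_im, sub_zero] using h2
    -- crude bound on Eb
    have ha1 : (1+l)^(2*σ) ≤ 1 + l := by
      calc (1+l)^(2*σ) ≤ (1+l)^(1:ℝ) := Real.rpow_le_rpow_of_exponent_le h1l hσ2
        _ = 1+l := Real.rpow_one _
    have ha2 : Lr^(2-(n:ℝ)/q) ≤ Lr^2 := by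
      calc Lr^(2-(n:ℝ)/q) ≤ Lr^(((2:ℕ)):ℝ) :=
            Real.rpow_le_rpow_of_exponent_le hLr1 (by push_cast; linarith)
        _ = Lr^(2:ℕ) := Real.rpow_natCast _ 2
    have hEb1 : Eb ≤ C*A*(1+l) := by
      have h1 : Eb ≤ C * (1+l) * Lr^2 * A / Lr^2 := by
        rw [hEbdef]; gcongr
      have h2 : C * (1+l) * Lr^2 * A / Lr^2 = C*A*(1+l) := by
        field_simp
      linarith [h1.trans_eq h2]
    -- bound on l
    have hxM : l^2/Lr^2 ≤ M + Eb := by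
      have h3 : (z L).re ≤ M := (Complex.re_le_norm _).trans (hM' L)
      have h4 := abs_le.1 hre
      linarith [h4.1]
    have hx2 : l^2 ≤ Lr^2 * (M + C*A*(1+l)) := by
      have := (div_le_iff₀ (by positivity : (0:ℝ) < Lr^2)).1 hxM
      nlinarith [hEb1, sq_nonneg Lr]
    have hstep : M + C*A*(1+l) ≤ M' * (1+l) := by
      have hh : M' * (1+l) = M + C*A*(1+l) + (1 + (M+1)*l) := by
        simp only [hM'def]; ring
      have hh2 : (0:ℝ) ≤ (M+1)*l := mul_nonneg (by linarith) hl0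
      linarith
    have hlP : l^2 ≤ Lr^2 * (M' * (1+l)) :=
      le_trans hx2 (mul_le_mul_of_nonneg_left hstep (by positivity))
    have hLrsq : (1:ℝ) ≤ Lr^2 := by nlinarith [hLr1]
    have hM'0 : (0:ℝ) ≤ M' := by linarith
    have expand : B * Lr^2 = Lr^2 + 2*M'*Lr^2 := by simp only [hBdef]; ring
    have h2M : (0:ℝ) ≤ 2*M'*Lr^2 := by positivity
    have hlB : l ≤ B * Lr^2 := by
      rcases le_or_gt l (Lr^2) with h | h
      · linarith [expand]
      · have hl1 : (1:ℝ) ≤ l := by linarith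
        have h5 : l^2 ≤ Lr^2*M'*(2*l) := by
          nlinarith [hlP, mul_nonneg (mul_nonneg (sq_nonneg Lr) hM'0) (by linarith : (0:ℝ) ≤ l - 1)]
        have h6 : l ≤ 2*M'*Lr^2 := by nlinarith [h5]
        linarith [expand]
    -- refined bound on Eb
    have expand2 : (1+B) * Lr^2 = Lr^2 + B*Lr^2 := by ring
    have h1lB : 1 + l ≤ (1+B) * Lr^2 := by linarith [expand2, hlB, hLrsq]
    have hb2 : ((1+B)*Lr^2)^(2*σ) = (1+B)^(2*σ) * Lr^(4*σ) := by
      rw [Real.mul_rpow (by linarith) (by positivity)]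
      congr 1
      rw [← Real.rpow_natCast Lr 2, ← Real.rpow_mul hLr0.le]
      congr 1
      push_cast; ring
    have hb1 : (1+l)^(2*σ) ≤ (1+B)^(2*σ) * Lr^(4*σ) := by
      rw [← hb2]
      exact Real.rpow_le_rpow (by linarith) h1lB (by linarith)
    have hpow : (1+B)^(2*σ) * Lr^(4*σ) * Lr^(2-(n:ℝ)/q) / Lr^2
        = (1+B)^(2*σ) * Lr^(4*σ - (n:ℝ)/q) := by
      rw [mul_assoc, ← Real.rpow_add hLr0, mul_div_assoc, ← Real.rpow_natCast Lr 2,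
        ← Real.rpow_sub hLr0]
      congr 2
      push_cast; ring
    have hEK : Eb ≤ K * Lr^(4*σ - (n:ℝ)/q) := by
      have h1 : Eb ≤ C * ((1+B)^(2*σ) * Lr^(4*σ)) * Lr^(2-(n:ℝ)/q) * A / Lr^2 := by
        rw [hEbdef]; gcongr
      have h2 : C * ((1+B)^(2*σ) * Lr^(4*σ)) * Lr^(2-(n:ℝ)/q) * A / Lr^2
          = C * A * ((1+B)^(2*σ) * Lr^(4*σ) * Lr^(2-(n:ℝ)/q) / Lr^2) := by ring
      rw [h2, hpow] at h1
      calc Eb ≤ C * A * ((1+B)^(2*σ) * Lr^(4*σ - (n:ℝ)/q)) := h1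
        _ = K * Lr^(4*σ - (n:ℝ)/q) := by rw [hKdef]; ring
    refine ⟨him.trans hEK, ?_⟩
    have h4 := abs_le.1 hre
    have hx0 : 0 ≤ l^2/Lr^2 := by positivity
    linarith [h4.2, hEK]
  -- the error tends to 0
  have hg0 : Tendsto (fun L : ℕ => K * (L:ℝ)^(4*σ - (n:ℝ)/q)) atTop (𝓝 0) := by
    have h1 : Tendsto (fun x : ℝ => x^(4*σ - (n:ℝ)/q)) atTop (𝓝 0) := by
      have := tendsto_rpow_neg_atTop (show (0:ℝ) < -(4*σ-(n:ℝ)/q) by linarith)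
      simpa using this
    have h2 := h1.comp tendsto_natCast_atTop_atTop
    simpa using h2.const_mul K
  have himc : Tendsto (fun L => (z L).im) atTop (𝓝 w.im) :=
    (Complex.continuous_im.tendsto w).comp hconv
  have hrec : Tendsto (fun L => (z L).re) atTop (𝓝 w.re) :=
    (Complex.continuous_re.tendsto w).comp hconv
  constructor
  · have h1 : Tendsto (fun L => |(z L).im|) atTop (𝓝 |w.im|) := himc.abs
    have h2 : |w.im| ≤ 0 :=
      le_of_tendsto_of_tendsto h1 (by simpa using hg0)
        (eventually_atTop.2 ⟨1, fun L hL => (hkey L hL).1⟩)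
    exact abs_nonpos_iff.mp h2
  · exact le_of_tendsto_of_tendsto (by simpa using hg0.neg) hrec
      (eventually_atTop.2 ⟨1, fun L hL => (hkey L hL).2⟩)
end

section
/- Let n ≥ 2 be an integer, let q be a real number with n/2 < q ≤ (n+1)/2, and set σ = n/(2q) − 1/2 (so 0 ≤ σ < 1/2 and 1 − n/q + 2σ = 0). Let A ≥ 0, C > 0. Suppose (z_L)_{L≥1} is a sequence of complex numbers converging to some z ∈ ℂ such that for every integer L ≥ 1 one has L |z_L|^{1/2} (1 + L^2 |z_L|)^{−σ} ≤ C L^{2 − n/q} A. Then |z|^{1/2 − σ} ≤ C·A. -/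
open Filter
open scoped Topology

/-- **Scaling lemma, part 2.** Let `n ≥ 2`, `n/2 < q ≤ (n+1)/2`, `σ = n/(2q) − 1/2`.
If a convergent sequence `(z_L)` satisfies `L |z_L|^{1/2} (1 + L^2 |z_L|)^{−σ} ≤
C L^{2−n/q} A` for every `L ≥ 1`, then its limit `z` satisfies `|z|^{1/2−σ} ≤ C A`. -/
theorem stmt_17 (n : ℕ) (hn : 2 ≤ n) (q : ℝ) (hq1 : (n : ℝ) / 2 < q)
    (hq2 : q ≤ ((n : ℝ) + 1) / 2)
    (σ : ℝ) (hσ : σ = (n : ℝ) / (2 * q) - 1 / 2)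
    (A C : ℝ) (hA : 0 ≤ A) (hC : 0 < C)
    (zL : ℕ → ℂ) (z : ℂ) (hconv : Tendsto zL atTop (𝓝 z))
    (hineq : ∀ L : ℕ, 1 ≤ L →
      (L : ℝ) * ‖zL L‖ ^ (1 / 2 : ℝ) *
          (1 + (L : ℝ) ^ 2 * ‖zL L‖) ^ (-σ) ≤
        C * (L : ℝ) ^ (2 - (n : ℝ) / q) * A) :
    ‖z‖ ^ (1 / 2 - σ) ≤ C * A := by
  have hn2 : (2:ℝ) ≤ (n:ℝ) := by exact_mod_cast hn
  have hq0 : 0 < q := lt_trans (by linarith) hq1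
  have hσlt : σ < 1 / 2 := by
    have h1 : (n : ℝ) / (2 * q) < 1 := by
      rw [div_lt_one (by positivity)]; linarith
    rw [hσ]; linarith
  have hexp : 2 - (n : ℝ) / q = 1 - 2 * σ := by
    have : (n : ℝ) / q = 2 * σ + 1 := by
      rw [hσ]; field_simp; ring
    rw [this]; ring
  set a : ℕ → ℝ := fun L => ‖zL L‖ with ha_def
  have ha : Tendsto a atTop (𝓝 (‖z‖)) :=
    (continuous_norm.tendsto z).comp hconv
  by_cases hz : ‖z‖ = 0
  · rw [hz, Real.zero_rpow (by linarith)]; positivity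
  have hzpos : 0 < ‖z‖ := lt_of_le_of_ne (norm_nonneg z) (Ne.symm hz)
  -- key pointwise inequality
  have key : ∀ L : ℕ, 1 ≤ L →
      (a L) ^ (1/2 : ℝ) * (((L:ℝ)^2)⁻¹ + a L) ^ (-σ) ≤ C * A := by
    intro L hL
    have hL1 : (1:ℝ) ≤ (L:ℝ) := by exact_mod_cast hL
    have hLpos : (0:ℝ) < (L:ℝ) := by linarith
    have hL2 : (0:ℝ) < (L:ℝ)^2 := by positivity
    have haL : 0 ≤ a L := norm_nonneg _
    have h := hineq L hL
    rw [hexp] at h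
    have hfac : 1 + (L:ℝ)^2 * a L = (L:ℝ)^2 * (((L:ℝ)^2)⁻¹ + a L) := by
      field_simp
    rw [hfac, Real.mul_rpow (le_of_lt hL2) (by positivity)] at h
    have hp : ((L:ℝ)^2) ^ (-σ) = (L:ℝ) ^ (-(2*σ)) := by
      rw [← Real.rpow_natCast (L:ℝ) 2, ← Real.rpow_mul (le_of_lt hLpos)]
      norm_num
    rw [hp] at h
    have hLrw : (L:ℝ) * a L ^ (1/2:ℝ) * ((L:ℝ) ^ (-(2*σ)) * (((L:ℝ)^2)⁻¹ + a L) ^ (-σ))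
        = (L:ℝ) ^ (1 - 2*σ) * ((a L) ^ (1/2:ℝ) * (((L:ℝ)^2)⁻¹ + a L) ^ (-σ)) := by
      rw [show (1 - 2*σ) = 1 + -(2*σ) by ring, Real.rpow_add hLpos, Real.rpow_one]
      ring
    rw [hLrw] at h
    have hLp : (0:ℝ) < (L:ℝ) ^ (1 - 2*σ) := Real.rpow_pos_of_pos hLpos _
    rw [show C * (L:ℝ) ^ (1 - 2*σ) * A = (L:ℝ) ^ (1 - 2*σ) * (C * A) by ring] at h
    exact le_of_mul_le_mul_left h hLp
  -- limit of the LHS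
  have tL2 : Tendsto (fun L : ℕ => (((L:ℝ)^2)⁻¹ + a L)) atTop (𝓝 (‖z‖)) := by
    have h1 : Tendsto (fun L : ℕ => ((L:ℝ)^2)⁻¹) atTop (𝓝 0) := by
      apply Tendsto.inv_tendsto_atTop
      exact (tendsto_pow_atTop (by norm_num)).comp tendsto_natCast_atTop_atTop
    have := h1.add ha
    rwa [zero_add] at this
  have t1 : Tendsto (fun L => (a L) ^ (1/2:ℝ)) atTop (𝓝 ((‖z‖) ^ (1/2:ℝ))) :=
    (Real.continuousAt_rpow_const _ _ (Or.inr (by norm_num))).tendsto.comp ha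
  have t2 : Tendsto (fun L : ℕ => (((L:ℝ)^2)⁻¹ + a L) ^ (-σ)) atTop
      (𝓝 ((‖z‖) ^ (-σ))) :=
    (Real.continuousAt_rpow_const _ _ (Or.inl hz)).tendsto.comp tL2
  have tfin : Tendsto (fun L : ℕ => (a L) ^ (1/2:ℝ) * (((L:ℝ)^2)⁻¹ + a L) ^ (-σ)) atTop
      (𝓝 ((‖z‖) ^ (1/2 - σ))) := by
    have := t1.mul t2
    rwa [← Real.rpow_add hzpos, show (1/2 : ℝ) + -σ = 1/2 - σ by ring] at this
  exact le_of_tendsto tfin (eventually_atTop.mpr ⟨1, key⟩)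
end
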